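/- arXiv:1409.5717 — 2 statements merged into one kernel-verified Lean document; each statement's English description precedes it below -/
import Mathlib

section
/- For any left Noetherian associative algebra A, the category of finitely generated A-modules is extension full in the category of all A-modules. -/
open CategoryTheory CategoryTheory.Limits
open scoped ZeroObject

universe v u

variable (C : Type u) [Category.{v} C] [Abelian C]

/-- A Yoneda `d`-extension `0 → N → X₁ → ⋯ → X_d → M → 0` (for `d ≥ 1`),
encoded as an exact sequence of `d + 4` composable objects whose two extreme
objects are zero. -/
structure ExtSeq (d : ℕ) (M N : C) : Type (max u v) where
  S : ComposableArrows C (d + 3)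
  exact : S.Exact
  isZero_first : IsZero (S.obj ⟨0, by omega⟩)
  isZero_last : IsZero (S.obj ⟨d + 3, by omega⟩)
  isoN : S.obj ⟨1, by omega⟩ ≅ N
  isoM : S.obj ⟨d + 2, by omega⟩ ≅ M

variable {C}

/-- The elementary relation on `d`-extensions: existence of a morphism of
exact sequences which is the identity on `M` and on `N`. -/
def ExtSeq.Rel {d : ℕ} {M N : C} (E F : ExtSeq C d M N) : Prop :=
  ∃ φ : E.S ⟶ F.S,
    φ.app ⟨1, by omega⟩ = E.isoN.hom ≫ F.isoN.inv ∧
    φ.app ⟨d + 2, by omega⟩ = E.isoM.hom ≫ F.isoM.inv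

variable (C)

/-- Yoneda Ext groups `Ext^d_B(M, N)` of the full subcategory `B` of `C`
whose objects are those satisfying the predicate `P` (the abelian structure
being inherited from `C`): equivalence classes of exact sequences all of whose
objects satisfy `P`, for the equivalence relation generated by morphisms of
extensions (in `B`, which by fullness are morphisms in `C`).  In degree `0`
this is just `Hom`. -/
def YExtP (P : C → Prop) : ℕ → C → C → Type (max u v)
  | 0, M, N => ULift.{u} (M ⟶ N)
  | (e + 1), M, N =>
      Quot (fun (E F : {E : ExtSeq C (e + 1) M N // ∀ i, P (E.S.obj i)}) =>
        ExtSeq.Rel E.1 F.1)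

variable {C}

/-- The canonical comparison map `Ext^d_B(M,N) → Ext^d_{B'}(M,N)` induced by an
inclusion `B ⊆ B'` of full subcategories of `C` (given by predicates `P ⊆ Q`). -/
def yextMap (P Q : C → Prop) (hPQ : ∀ X, P X → Q X) :
    ∀ (d : ℕ) (M N : C), YExtP C P d M N → YExtP C Q d M N
  | 0, _, _ => fun f => f
  | (_ + 1), _, _ =>
      Quot.lift (fun E => Quot.mk _ ⟨E.1, fun i => hPQ _ (E.2 i)⟩)
        (fun _ _ h => Quot.sound h)

/-- `P` defines a Serre subcategory of `C`: the corresponding full subcategory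
is closed under subobjects, quotients and extensions. -/
def SerreSub (P : C → Prop) : Prop :=
  (∀ ⦃X Y : C⦄ (f : X ⟶ Y), Mono f → P Y → P X) ∧
  (∀ ⦃X Y : C⦄ (f : X ⟶ Y), Epi f → P X → P Y) ∧
  (∀ S : ShortComplex C, S.ShortExact → P S.X₁ → P S.X₃ → P S.X₂)

/-- `P` defines a full abelian subcategory of `C` whose abelian structure is
inherited from `C` (equivalently, the inclusion is exact): it is closed under
isomorphisms, contains `0`, and is closed under biproducts, kernels and
cokernels. -/
def AbelianSub (P : C → Prop) : Prop :=
  (∀ ⦃X Y : C⦄, (X ≅ Y) → P X → P Y) ∧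
  P (0 : C) ∧
  (∀ ⦃X Y : C⦄, P X → P Y → P (X ⊞ Y)) ∧
  (∀ ⦃X Y : C⦄ (f : X ⟶ Y), P X → P Y → P (kernel f)) ∧
  (∀ ⦃X Y : C⦄ (f : X ⟶ Y), P X → P Y → P (cokernel f))

/-- The subcategory given by `P` is extension full in the one given by `Q`. -/
def ExtFullIn (P Q : C → Prop) (hPQ : ∀ X, P X → Q X) : Prop :=
  ∀ (d : ℕ) (M N : C), P M → P N → Function.Bijective (yextMap P Q hPQ d M N)

/-- The subcategory given by `P` is extension full in `C`. -/
abbrev ExtFull (P : C → Prop) : Prop :=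
  ExtFullIn P (fun _ => True) (fun _ _ => trivial) (C := C)

/-- The projective dimension of `M` in the full subcategory given by `P`:
the largest `d` such that `Ext^d(M,N) ≠ 0` for some `N` satisfying `P`. -/
noncomputable def pDim (P : C → Prop) (M : C) : ℕ∞ :=
  sSup ((fun d : ℕ => (d : ℕ∞)) ''
    {d | ∃ N, P N ∧ ¬ Subsingleton (YExtP C P d M N)})

/-- The global dimension of the full subcategory given by `P`. -/
noncomputable def glDim (P : C → Prop) : ℕ∞ :=
  sSup ((fun d : ℕ => (d : ℕ∞)) ''
    {d | ∃ M N, P M ∧ P N ∧ ¬ Subsingleton (YExtP C P d M N)})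

/-!
Over a left noetherian ring, an exact sequence `0 → N → X₁ → ⋯ → X_d → M → 0` with `M`, `N`
finitely generated contains an exact subsequence of finitely generated submodules with the same
ends, even one containing prescribed finitely generated submodules of the `Xᵢ`: choosing the terms
from right to left, the new `Y₀` receives lifts of generators of `Y₁ ∩ im f₀`, which is finitely
generated since `Y₁` is. The inclusion of such a subsequence is a morphism of extensions, so every
class in `Ext_{A-Mod}` comes from `A-mod`. Two finitely generated subextensions of related
extensions `E → F` are both related to a common finitely generated subextension of `F`, so this
representative is well defined in `Ext_{A-mod}` and inverts the comparison map.
-/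

theorem Submodule.exists_fg_map_eq_of_le_range {R M N : Type*} [Ring R] [AddCommGroup M]
    [Module R M] [AddCommGroup N] [Module R N] {f : M →ₗ[R] N} {P : Submodule R N}
    (hP : P.FG) (hPf : P ≤ LinearMap.range f) : ∃ L : Submodule R M, L.FG ∧ L.map f = P := by
  obtain ⟨s, rfl⟩ := hP
  choose g hg using fun x : s => hPf (subset_span x.2)
  refine ⟨span R (Set.range g), fg_span (Set.finite_range g), ?_⟩
  rw [map_span, ← Set.range_comp, show f ∘ g = Subtype.val from funext hg, Subtype.range_coe]

namespace CategoryTheory.ComposableArrows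

variable {A : Type*} [Ring A] {n : ℕ}

/-- `ker_le` is exactness of the sequence of the `Y i` at `i + 1`. -/
structure ExactSubfamily (S : ComposableArrows (ModuleCat.{v} A) n) where
  toFun : ∀ i, Submodule A (S.obj i)
  map_le : ∀ (i : ℕ) (hi : i + 1 ≤ n),
    (toFun ⟨i, by omega⟩).map (S.map' i (i + 1)).hom ≤ toFun ⟨i + 1, by omega⟩
  ker_le : ∀ (i : ℕ) (hi : i + 2 ≤ n),
    toFun ⟨i + 1, by omega⟩ ⊓ LinearMap.ker (S.map' (i + 1) (i + 2)).hom ≤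
      (toFun ⟨i, by omega⟩).map (S.map' i (i + 1)).hom

namespace ExactSubfamily

variable {S : ComposableArrows (ModuleCat.{v} A) n}

instance : CoeFun S.ExactSubfamily (fun _ => ∀ i, Submodule A (S.obj i)) := ⟨toFun⟩

section

variable (Y : S.ExactSubfamily)

noncomputable def arrows : ComposableArrows (ModuleCat.{v} A) n :=
  mkOfObjOfMapSucc (fun i => ModuleCat.of A (Y i))
    (fun i => ModuleCat.ofHom ((S.map' i (i + 1)).hom.restrict
      fun _ hx => Y.map_le i i.2 (Submodule.mem_map_of_mem hx)))

lemma arrows_map' (i : ℕ) (hi : i + 1 ≤ n) :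
    Y.arrows.map' i (i + 1) = ModuleCat.ofHom ((S.map' i (i + 1)).hom.restrict
      fun _ hx => Y.map_le i hi (Submodule.mem_map_of_mem hx)) :=
  mkOfObjOfMapSucc_map_succ _ _ i hi

noncomputable def ι : Y.arrows ⟶ S :=
  homMk (fun i => ModuleCat.ofHom (Y i).subtype) fun i hi => by
    rw [arrows_map' Y i hi]
    rfl

instance (i : Fin (n + 1)) : Mono (Y.ι.app i) :=
  (ModuleCat.mono_iff_injective _).mpr (Y i).injective_subtype

lemma arrows_exact (hS : S.IsComplex) : Y.arrows.Exact where
  zero i hi := by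
    rw [← cancel_mono (Y.ι.app _), Category.assoc, Y.ι.naturality, ← Category.assoc,
      Y.ι.naturality, Category.assoc, hS.zero i hi, comp_zero, zero_comp]
  exact i hi := by
    rw [ShortComplex.moduleCat_exact_iff]
    rintro ⟨x, hx⟩ hgx
    have hgx : (S.map' (i + 1) (i + 2)).hom x = 0 := by
      change (Y.arrows.map' (i + 1) (i + 2)).hom ⟨x, hx⟩ = 0 at hgx
      rw [arrows_map'] at hgx
      exact congrArg Subtype.val hgx
    obtain ⟨y, hy, rfl⟩ := Y.ker_le i hi ⟨hx, hgx⟩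
    refine ⟨⟨y, hy⟩, ?_⟩
    change (Y.arrows.map' i (i + 1)).hom ⟨y, hy⟩ = _
    rw [arrows_map']
    rfl

noncomputable def map {T : ComposableArrows (ModuleCat.{v} A) n} {W : T.ExactSubfamily}
    (φ : S ⟶ T) (h : ∀ i, (Y i).map (φ.app i).hom ≤ W i) : Y.arrows ⟶ W.arrows :=
  homMk (fun i => ModuleCat.ofHom ((φ.app i).hom.restrict
      fun _ hx => h i (Submodule.mem_map_of_mem hx))) fun i hi => by
    rw [arrows_map', arrows_map']
    ext ⟨x, hx⟩
    exact Subtype.ext (ConcreteCategory.congr_hom (φ.naturality _) x)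

end

def cons {S : ComposableArrows (ModuleCat.{v} A) (n + 1)} (hS : S.Exact)
    (Y : S.δ₀.ExactSubfamily) (Y₀ : Submodule A (S.obj 0))
    (hmap : Y₀.map (S.map' 0 1).hom ≤ Y 0)
    (hrange : Y 0 ⊓ LinearMap.range (S.map' 0 1).hom ≤ Y₀.map (S.map' 0 1).hom) :
    S.ExactSubfamily where
  toFun := Fin.cons (α := fun i => Submodule A (S.obj i)) Y₀ Y
  map_le i hi := by
    rcases i with _ | i
    · exact hmap
    · exact Y.map_le i (by omega)
  ker_le i hi := by
    rcases i with _ | i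
    · have hker : LinearMap.ker (S.map' 1 2).hom = LinearMap.range (S.map' 0 1).hom :=
        ((ShortComplex.moduleCat_exact_iff_range_eq_ker _).mp (hS.exact 0 hi)).symm
      exact (le_of_eq (congrArg (Y 0 ⊓ ·) hker)).trans hrange
    · exact Y.ker_le i (by omega)

theorem exists_fg [IsNoetherianRing A] {S : ComposableArrows (ModuleCat.{v} A) n}
    (hS : S.Exact) (Z : ∀ i, Submodule A (S.obj i)) (hZ : ∀ i, (Z i).FG) :
    ∃ Y : S.ExactSubfamily, (∀ i, Z i ≤ Y i) ∧ ∀ i, (Y i).FG := by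
  induction n with
  | zero => exact ⟨⟨Z, fun i hi => by omega, fun i hi => by omega⟩, fun _ => le_rfl, hZ⟩
  | succ n ih =>
    have hδ : S.δ₀.Exact := by rcases n with _ | n; exacts [exact₀ _, hS.δ₀]
    -- pushing `Z 0` forward makes `f₀ (Z 0) ⊆ Y 0`, so that `Z 0` fits into the new first term
    obtain ⟨Y, hZY, hY⟩ := ih hδ
      (fun i => Z i.succ ⊔ (Z 0).map (S.map (homOfLE (Fin.zero_le i.succ))).hom)
      (fun i => (hZ _).sup ((hZ 0).map _))
    -- lifting generators of `Y 0 ∩ range f₀` makes the subfamily exact at `1`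
    obtain ⟨L, hL, hLY⟩ := Submodule.exists_fg_map_eq_of_le_range ((hY 0).of_le inf_le_left)
      (inf_le_right : Y 0 ⊓ LinearMap.range (S.map' 0 1).hom ≤ _)
    refine ⟨cons hS Y (Z 0 ⊔ L) ?_ ?_, Fin.cases le_sup_left fun i => le_sup_left.trans (hZY i),
      Fin.cases ((hZ 0).sup hL) hY⟩
    · exact Submodule.map_le_iff_le_comap.mpr <| sup_le
        (Submodule.map_le_iff_le_comap.mp (le_sup_right.trans (hZY 0)))
        (Submodule.map_le_iff_le_comap.mp (hLY.le.trans inf_le_left))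
    · exact hLY.ge.trans (Submodule.map_mono le_sup_right)

end ExactSubfamily

end CategoryTheory.ComposableArrows

namespace ExtSeq

section

variable {e : ℕ} {M N : C}

abbrev yextClass (P : C → Prop) (E : ExtSeq C (e + 1) M N) (hE : ∀ i, P (E.S.obj i)) :
    YExtP C P (e + 1) M N :=
  Quot.mk _ ⟨E, hE⟩

lemma yextClass_eq_of_rel {P : C → Prop} {E F : ExtSeq C (e + 1) M N} (hEF : E.Rel F)
    (hE : ∀ i, P (E.S.obj i)) (hF : ∀ i, P (F.S.obj i)) :
    yextClass P E hE = yextClass P F hF :=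
  Quot.sound hEF

end

variable {A : Type*} [Ring A] {d : ℕ} {M N : ModuleCat.{v} A}

structure Subextension (E : ExtSeq (ModuleCat.{v} A) d M N) extends E.S.ExactSubfamily where
  eq_top_N : toFun ⟨1, by omega⟩ = ⊤
  eq_top_M : toFun ⟨d + 2, by omega⟩ = ⊤

namespace Subextension

variable {E : ExtSeq (ModuleCat.{v} A) d M N}

instance : CoeFun E.Subextension (fun _ => ∀ i, Submodule A (E.S.obj i)) := ⟨fun Y => Y.toFun⟩

noncomputable def toExtSeq (Y : E.Subextension) : ExtSeq (ModuleCat.{v} A) d M N where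
  S := Y.arrows
  exact := Y.arrows_exact E.exact.toIsComplex
  isZero_first := E.isZero_first.of_mono (Y.ι.app _)
  isZero_last := E.isZero_last.of_mono (Y.ι.app _)
  isoN := (LinearEquiv.ofTop _ Y.eq_top_N).toModuleIso ≪≫ E.isoN
  isoM := (LinearEquiv.ofTop _ Y.eq_top_M).toModuleIso ≪≫ E.isoM

lemma rel_toExtSeq (Y : E.Subextension) : Rel Y.toExtSeq E := by
  refine ⟨Y.ι, ?_, ?_⟩
  · ext x
    exact (E.isoN.hom_inv_id_apply x.1).symm
  · ext x
    exact (E.isoM.hom_inv_id_apply x.1).symm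

lemma rel_toExtSeq_of_map_le {F : ExtSeq (ModuleCat.{v} A) d M N} (φ : E.S ⟶ F.S)
    (hφN : φ.app ⟨1, by omega⟩ = E.isoN.hom ≫ F.isoN.inv)
    (hφM : φ.app ⟨d + 2, by omega⟩ = E.isoM.hom ≫ F.isoM.inv)
    (Y : E.Subextension) (W : F.Subextension) (h : ∀ i, (Y i).map (φ.app i).hom ≤ W i) :
    Rel Y.toExtSeq W.toExtSeq := by
  refine ⟨Y.map φ h, ?_, ?_⟩ <;>
  · ext ⟨x, hx⟩
    exact Subtype.ext (ConcreteCategory.congr_hom ‹_› x)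

lemma finite_obj (Y : E.Subextension) (hY : ∀ i, (Y i).FG) (i : Fin (d + 4)) :
    Module.Finite A (Y.toExtSeq.S.obj i) :=
  Module.Finite.iff_fg.mpr (hY i)

variable [IsNoetherianRing A] [Module.Finite A M] [Module.Finite A N]

theorem exists_fg (E : ExtSeq (ModuleCat.{v} A) d M N) (Z : ∀ i, Submodule A (E.S.obj i))
    (hZ : ∀ i, (Z i).FG) : ∃ Y : E.Subextension, (∀ i, Z i ≤ Y i) ∧ ∀ i, (Y i).FG := by
  classical
  -- enlarging `Z` to `⊤` at the finitely generated terms forces `Y = ⊤` at `N` and `M`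
  obtain ⟨Y, hZY, hY⟩ := ComposableArrows.ExactSubfamily.exists_fg E.exact
    (fun i => Z i ⊔ if Module.Finite A (E.S.obj i) then ⊤ else ⊥)
    (fun i => (hZ i).sup (by split_ifs; exacts [Module.Finite.fg_top, Submodule.fg_bot]))
  have eq_top (i) (hi : Module.Finite A (E.S.obj i)) : Y i = ⊤ :=
    top_le_iff.mp ((if_pos hi).ge.trans (le_sup_right.trans (hZY i)))
  exact ⟨⟨Y, eq_top _ (.equiv E.isoN.symm.toLinearEquiv),
    eq_top _ (.equiv E.isoM.symm.toLinearEquiv)⟩, fun i => le_sup_left.trans (hZY i), hY⟩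

theorem yextClass_eq_of_rel_of_fg {E F : ExtSeq (ModuleCat.{v} A) (d + 1) M N}
    (hEF : E.Rel F) (Y : E.Subextension) (hY : ∀ i, (Y i).FG) (W : F.Subextension)
    (hW : ∀ i, (W i).FG) :
    yextClass (fun X : ModuleCat.{v} A => Module.Finite A X) Y.toExtSeq (Y.finite_obj hY) =
      yextClass (fun X : ModuleCat.{v} A => Module.Finite A X) W.toExtSeq (W.finite_obj hW) := by
  obtain ⟨φ, hφN, hφM⟩ := hEF
  obtain ⟨V, hV, hVfg⟩ := exists_fg F (fun i => W i ⊔ (Y i).map (φ.app i).hom)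
    fun i => (hW i).sup ((hY i).map _)
  have hYV : Rel Y.toExtSeq V.toExtSeq :=
    rel_toExtSeq_of_map_le φ hφN hφM Y V fun i => le_sup_right.trans (hV i)
  have hWV : Rel W.toExtSeq V.toExtSeq :=
    rel_toExtSeq_of_map_le (𝟙 F.S) F.isoN.hom_inv_id.symm F.isoM.hom_inv_id.symm W V
      fun i => by simpa using le_sup_left.trans (hV i)
  exact (yextClass_eq_of_rel hYV _ (V.finite_obj hVfg)).trans (yextClass_eq_of_rel hWV _ _).symm

end Subextension

variable [IsNoetherianRing A] [Module.Finite A M] [Module.Finite A N]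

noncomputable def fgSubextension (E : ExtSeq (ModuleCat.{v} A) d M N) : E.Subextension :=
  (Subextension.exists_fg E (fun _ => ⊥) fun _ => Submodule.fg_bot).choose

lemma fg_fgSubextension (E : ExtSeq (ModuleCat.{v} A) d M N) (i : Fin (d + 4)) :
    (E.fgSubextension i).FG :=
  (Subextension.exists_fg E (fun _ => ⊥) fun _ => Submodule.fg_bot).choose_spec.2 i

end ExtSeq

variable {A : Type*} [Ring A] [IsNoetherianRing A] {M N : ModuleCat.{v} A}
  [Module.Finite A M] [Module.Finite A N] in
noncomputable def yextFGOfYExt (e : ℕ) :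
    YExtP (ModuleCat.{v} A) (fun _ => True) (e + 1) M N →
      YExtP (ModuleCat.{v} A) (fun X => Module.Finite A X) (e + 1) M N :=
  Quot.lift (fun E => ExtSeq.yextClass _ E.1.fgSubextension.toExtSeq
      (E.1.fgSubextension.finite_obj E.1.fg_fgSubextension))
    fun E F h => ExtSeq.Subextension.yextClass_eq_of_rel_of_fg h _ E.1.fg_fgSubextension _
      F.1.fg_fgSubextension

theorem finitely_generated_extension_full_of_noetherian_general
    (A : Type) [Ring A] [IsNoetherianRing A] :
    ExtFull (fun M : ModuleCat A => Module.Finite A M) := by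
  rintro (_ | e) M N hM hN
  · exact Function.bijective_id
  · refine Function.bijective_iff_has_inverse.mpr
      ⟨yextFGOfYExt e, Quot.ind fun E => ?_, Quot.ind fun E => ?_⟩
    · exact ExtSeq.yextClass_eq_of_rel (P := fun X : ModuleCat A => Module.Finite A X)
        E.1.fgSubextension.rel_toExtSeq _ E.2
    · exact ExtSeq.yextClass_eq_of_rel (P := fun _ => True)
        E.1.fgSubextension.rel_toExtSeq _ E.2

/-- **Corollary (ii).**  For a left Noetherian associative algebra `A` (over a
field `k`), the category `A`-mod of finitely generated `A`-modules is
extension full in the category `A`-Mod of all `A`-modules. -/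
theorem finitely_generated_extension_full_of_noetherian
    (k : Type) [Field k] (A : Type) [Ring A] [Algebra k A] [IsNoetherianRing A] :
    ExtFull (fun M : ModuleCat A => Module.Finite A M) :=
  finitely_generated_extension_full_of_noetherian_general A
end

section
/- Let 𝒜 and ℬ be abelian categories and (F, G) an adjoint pair of exact functors F : 𝒜 → ℬ and G : ℬ → 𝒜. Then for every d ≥ 0, N in 𝒜 and M in ℬ, there are isomorphisms Ext^d_ℬ(F(N), M) ≅ Ext^d_𝒜(N, G(M)), natural in both N and M. -/
/-!
Exact functors are additive, so the adjunction extends degreewise to cochain complexes, and they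
preserve quasi-isomorphisms, so it descends to an adjunction between the derived
categories. Writing `Ext^d(X, Y) = Hom(X, Y⟦d⟧)` in the derived category, the derived adjunction,
the compatibility of the derived functor of `G` with shifts, and the identification of the derived
functors on complexes concentrated in degree `0` give the isomorphism; each of these ingredients is
natural, hence so is the isomorphism.
-/

open CategoryTheory CategoryTheory.Limits CategoryTheory.Abelian

open DerivedCategory (Q)

universe w₁ w₂ v₁ v₂ u₁ u₂

namespace CategoryTheory.Adjunction

section HomologicalComplex

variable {C D : Type*} [Category* C] [Category* D] [Preadditive C] [Preadditive D]
  {F : C ⥤ D} {G : D ⥤ C} [F.Additive] [G.Additive]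

noncomputable def mapHomologicalComplex (adj : F ⊣ G) {ι : Type*} (c : ComplexShape ι) :
    F.mapHomologicalComplex c ⊣ G.mapHomologicalComplex c :=
  Adjunction.mkOfUnitCounit
    { unit :=
        { app K :=
            { f i := adj.unit.app (K.X i)
              comm' _ _ _ := (adj.unit.naturality _).symm }
          naturality _ _ f := by ext; exact adj.unit.naturality (f.f _) }
      counit :=
        { app L :=
            { f i := adj.counit.app (L.X i)
              comm' _ _ _ := (adj.counit.naturality _).symm }
          naturality _ _ f := by ext; exact adj.counit.naturality (f.f _) }
      left_triangle := by
        ext K i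
        exact (congrArg (F.map (adj.unit.app (K.X i)) ≫ ·) (Category.id_comp _)).trans
          (adj.left_triangle_components (K.X i))
      right_triangle := by
        ext L i
        exact (congrArg (adj.unit.app (G.obj (L.X i)) ≫ ·) (Category.id_comp _)).trans
          (adj.right_triangle_components (L.X i)) }

end HomologicalComplex

section ShiftedHom

variable {C D : Type*} [Category* C] [Category* D] [Preadditive C] [Preadditive D]
  {A : Type*} [AddMonoid A] [HasShift C A] [HasShift D A]
  {F : C ⥤ D} {G : D ⥤ C} (adj : F ⊣ G) [F.Additive] [G.CommShift A]

noncomputable def shiftedHomAddEquiv (X : C) (Y : D) (a : A) :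
    ShiftedHom (F.obj X) Y a ≃+ ShiftedHom X (G.obj Y) a :=
  (adj.homAddEquiv X (Y⟦a⟧)).trans
    (Linear.homCongr ℤ (Iso.refl X) ((G.commShiftIso a).app Y)).toAddEquiv

lemma shiftedHomAddEquiv_apply (X : C) (Y : D) (a : A) (x : ShiftedHom (F.obj X) Y a) :
    adj.shiftedHomAddEquiv X Y a x = adj.homEquiv _ _ x ≫ (G.commShiftIso a).hom.app Y := by
  simp [shiftedHomAddEquiv, Linear.homCongr_apply]

lemma shiftedHomAddEquiv_naturality_left {X' X : C} (f : X' ⟶ X) (Y : D) (a : A)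
    (x : ShiftedHom (F.obj X) Y a) :
    adj.shiftedHomAddEquiv X' Y a (F.map f ≫ x) = f ≫ adj.shiftedHomAddEquiv X Y a x := by
  simp [shiftedHomAddEquiv_apply, homEquiv_naturality_left]

lemma shiftedHomAddEquiv_naturality_right (X : C) {Y Y' : D} (g : Y ⟶ Y') (a : A)
    (x : ShiftedHom (F.obj X) Y a) :
    adj.shiftedHomAddEquiv X Y' a (x ≫ g⟦a⟧') =
      adj.shiftedHomAddEquiv X Y a x ≫ (G.map g)⟦a⟧' := by
  simp [shiftedHomAddEquiv_apply, homEquiv_naturality_right]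

end ShiftedHom

section DerivedCategory

variable {C D : Type*} [Category* C] [Category* D] [Abelian C] [Abelian D]
  [HasDerivedCategory C] [HasDerivedCategory D]
  {F : C ⥤ D} {G : D ⥤ C} (adj : F ⊣ G) [F.Additive] [G.Additive]
  [PreservesFiniteLimits F] [PreservesFiniteColimits F]
  [PreservesFiniteLimits G] [PreservesFiniteColimits G]

noncomputable def mapDerivedCategory : F.mapDerivedCategory ⊣ G.mapDerivedCategory :=
  letI : CatCommSq (F.mapHomologicalComplex (.up ℤ)) Q Q F.mapDerivedCategory :=
    ⟨F.mapDerivedCategoryFactors.symm⟩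
  letI : CatCommSq (G.mapHomologicalComplex (.up ℤ)) Q Q G.mapDerivedCategory :=
    ⟨G.mapDerivedCategoryFactors.symm⟩
  (adj.mapHomologicalComplex (.up ℤ)).localization Q (HomologicalComplex.quasiIso C (.up ℤ))
    Q (HomologicalComplex.quasiIso D (.up ℤ)) F.mapDerivedCategory G.mapDerivedCategory

variable [HasExt C] [HasExt D]

noncomputable def extAddEquiv (d : ℕ) (N : C) (M : D) :
    Ext (F.obj N) M d ≃+ Ext N (G.obj M) d :=
  Ext.homAddEquiv.trans <|
    (Linear.homCongr ℤ ((F.mapDerivedCategorySingleFunctor 0).app N).symm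
      (Iso.refl _)).toAddEquiv.trans <|
    (adj.mapDerivedCategory.shiftedHomAddEquiv _ _ (d : ℤ)).trans <|
    (Linear.homCongr ℤ (Iso.refl _)
      ((shiftFunctor _ (d : ℤ)).mapIso
        ((G.mapDerivedCategorySingleFunctor 0).app M))).toAddEquiv.trans
    Ext.homAddEquiv.symm

lemma extAddEquiv_hom (d : ℕ) (N : C) (M : D) (α : Ext (F.obj N) M d) :
    (adj.extAddEquiv d N M α).hom =
      adj.mapDerivedCategory.shiftedHomAddEquiv _ _ (d : ℤ)
          ((F.mapDerivedCategorySingleFunctor 0).hom.app N ≫ α.hom) ≫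
        ((G.mapDerivedCategorySingleFunctor 0).hom.app M)⟦(d : ℤ)⟧' := by
  rw [← Ext.homAddEquiv_apply]
  simp [extAddEquiv, Linear.homCongr_apply]

lemma extAddEquiv_mk₀_comp (d : ℕ) {N' N : C} (f : N' ⟶ N) (M : D) (α : Ext (F.obj N) M d) :
    adj.extAddEquiv d N' M ((Ext.mk₀ (F.map f)).comp α (zero_add d)) =
      (Ext.mk₀ f).comp (adj.extAddEquiv d N M α) (zero_add d) := by
  ext
  simp only [extAddEquiv_hom, Ext.comp_hom, Ext.mk₀_hom, ShiftedHom.mk₀_comp]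
  have h := (F.mapDerivedCategorySingleFunctor 0).hom.naturality f
  dsimp at h
  rw [← Category.assoc, ← h, Category.assoc, shiftedHomAddEquiv_naturality_left, Category.assoc]

lemma extAddEquiv_comp_mk₀ (d : ℕ) (N : C) {M M' : D} (g : M ⟶ M') (α : Ext (F.obj N) M d) :
    adj.extAddEquiv d N M' (α.comp (Ext.mk₀ g) (add_zero d)) =
      (adj.extAddEquiv d N M α).comp (Ext.mk₀ (G.map g)) (add_zero d) := by
  ext
  simp only [extAddEquiv_hom, Ext.comp_hom, Ext.mk₀_hom, ShiftedHom.comp_mk₀]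
  have h := (G.mapDerivedCategorySingleFunctor 0).hom.naturality g
  dsimp at h
  rw [← Category.assoc, shiftedHomAddEquiv_naturality_right, Category.assoc, ← Functor.map_comp, h,
    Functor.map_comp, Category.assoc]

end DerivedCategory

end CategoryTheory.Adjunction

/-- **Adjunction lemma.**  Let `𝒜` and `ℬ` be abelian categories and `(F, G)`
an adjoint pair of exact functors `F : 𝒜 ⥤ ℬ` and `G : ℬ ⥤ 𝒜`.  Then for
every `d ≥ 0`, `N` in `𝒜` and `M` in `ℬ` there are isomorphisms
`Ext^d_ℬ(F(N), M) ≅ Ext^d_𝒜(N, G(M))`, natural in both `N` and `M` (naturality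
being expressed via composition with degree-zero Ext classes of morphisms). -/
theorem ext_adjunction_of_exact_adjoint_pair
    {𝒜 : Type u₁} {ℬ : Type u₂} [Category.{v₁} 𝒜] [Category.{v₂} ℬ]
    [Abelian 𝒜] [Abelian ℬ] [HasExt.{w₁} 𝒜] [HasExt.{w₂} ℬ]
    (F : 𝒜 ⥤ ℬ) (G : ℬ ⥤ 𝒜) (adj : F ⊣ G)
    [PreservesFiniteLimits F] [PreservesFiniteColimits F]
    [PreservesFiniteLimits G] [PreservesFiniteColimits G]
    (d : ℕ) :
    ∃ e : ∀ (N : 𝒜) (M : ℬ), Ext (F.obj N) M d ≃+ Ext N (G.obj M) d,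
      (∀ (N' N : 𝒜) (M : ℬ) (f : N' ⟶ N) (α : Ext (F.obj N) M d),
        e N' M ((Ext.mk₀ (F.map f)).comp α (zero_add d)) =
          (Ext.mk₀ f).comp (e N M α) (zero_add d)) ∧
      (∀ (N : 𝒜) (M M' : ℬ) (g : M ⟶ M') (α : Ext (F.obj N) M d),
        e N M' (α.comp (Ext.mk₀ g) (add_zero d)) =
          (e N M α).comp (Ext.mk₀ (G.map g)) (add_zero d)) := by
  have : F.Additive := Functor.additive_of_preserves_binary_products F
  have : G.Additive := adj.right_adjoint_additive
  let := HasDerivedCategory.standard 𝒜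
  let := HasDerivedCategory.standard ℬ
  exact ⟨adj.extAddEquiv d, fun _ _ M f α => adj.extAddEquiv_mk₀_comp d f M α,
    fun N _ _ g α => adj.extAddEquiv_comp_mk₀ d N g α⟩
end
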